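/- arXiv:2410.12614 — 4 statements merged into one kernel-verified Lean document; each statement's English description precedes it below -/
import Mathlib

section
/- If A is a nonsingular n×n real matrix and E is an n×n real matrix, then |det(A+E) - det(A)| ≤ ((‖A^{-1}‖₂ ‖E‖₂ + 1)^n - 1) · |det(A)|. -/
/-- The spectral (operator 2-) norm of a real square matrix. -/
noncomputable def specNorm {n : ℕ} (A : Matrix (Fin n) (Fin n) ℝ) : ℝ :=
  ‖Matrix.toEuclideanCLM (𝕜 := ℝ) A‖

/-!
Write `A + E = A (1 + M)` with `M = A⁻¹ E`, so that `det (A + E) - det A = det A (det (1 + M) - 1)`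
and `‖M‖ ≤ ‖A⁻¹‖ ‖E‖`. Over `ℂ`, `det (1 + M)` is the product of the `n` eigenvalues `1 + λᵢ`
of `1 + M`, and `|λᵢ| ≤ ‖M‖` since the spectral norm of a real matrix does not grow under
complexification. Expanding the product, `|∏ (1 + λᵢ) - 1| ≤ ∏ (1 + |λᵢ|) - 1 ≤ (1 + ‖M‖)ⁿ - 1`.
-/

open Matrix WithLp
open scoped Matrix.Norms.L2Operator

theorem Multiset.norm_prod_sub_one_le {R : Type*} [SeminormedCommRing R] [NormOneClass R]
    (s : Multiset R) {x : ℝ} (h : ∀ a ∈ s, ‖a - 1‖ ≤ x) :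
    ‖s.prod - 1‖ ≤ (x + 1) ^ card s - 1 := by
  induction s using Multiset.induction with
  | empty => simp
  | cons a t ih =>
    have ha : ‖a - 1‖ ≤ x := h a (mem_cons_self a t)
    have ht := ih fun b hb => h b (mem_cons_of_mem hb)
    have hx : 0 ≤ x := (norm_nonneg _).trans ha
    have ha' : ‖a‖ ≤ x + 1 := by
      linarith [norm_le_norm_add_norm_sub' a 1, norm_one (α := R)]
    rw [prod_cons, card_cons, show a * t.prod - 1 = a * (t.prod - 1) + (a - 1) by ring]
    calc ‖a * (t.prod - 1) + (a - 1)‖ ≤ ‖a‖ * ‖t.prod - 1‖ + ‖a - 1‖ :=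
          (norm_add_le _ _).trans (add_le_add_left (norm_mul_le _ _) _)
      _ ≤ (x + 1) * ((x + 1) ^ card t - 1) + x := by gcongr
      _ = (x + 1) ^ (card t + 1) - 1 := by ring

variable {n : Type*} [Fintype n]

theorem EuclideanSpace.norm_sq_eq_re_add_im (x : EuclideanSpace ℂ n) :
    ‖x‖ ^ 2 = ‖toLp 2 fun i => (x i).re‖ ^ 2 + ‖toLp 2 fun i => (x i).im‖ ^ 2 := by
  rw [EuclideanSpace.norm_sq_eq, EuclideanSpace.norm_sq_eq, EuclideanSpace.norm_sq_eq,
    ← Finset.sum_add_distrib]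
  congr 1 with i
  rw [Complex.sq_norm, Complex.normSq_apply, Real.norm_eq_abs, Real.norm_eq_abs, sq_abs, sq_abs,
    sq, sq]

theorem Matrix.mulVec_map_ofReal (M : Matrix n n ℝ) (x : n → ℂ) (i : n) :
    (M.map (↑) *ᵥ x) i = ⟨(M *ᵥ fun j => (x j).re) i, (M *ᵥ fun j => (x j).im) i⟩ := by
  apply Complex.ext <;> simp [mulVec, dotProduct, Complex.re_sum, Complex.im_sum]

theorem Matrix.l2_opNorm_map_ofReal_le [DecidableEq n] (M : Matrix n n ℝ) :
    ‖M.map ((↑) : ℝ → ℂ)‖ ≤ ‖M‖ := by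
  have hM (v : n → ℝ) : ‖toLp 2 (M *ᵥ v)‖ ^ 2 ≤ ‖M‖ ^ 2 * ‖toLp 2 v‖ ^ 2 := by
    rw [← mul_pow, ← toEuclideanCLM_toLp]
    exact pow_le_pow_left₀ (norm_nonneg _) ((toEuclideanCLM (𝕜 := ℝ) M).le_opNorm _) 2
  rw [cstar_norm_def]
  refine ContinuousLinearMap.opNorm_le_bound _ (norm_nonneg _) fun x => ?_
  refine (sq_le_sq₀ (norm_nonneg _) (by positivity)).mp ?_
  rw [mul_pow, EuclideanSpace.norm_sq_eq_re_add_im, EuclideanSpace.norm_sq_eq_re_add_im x, mul_add]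
  simp only [ofLp_toEuclideanCLM, mulVec_map_ofReal]
  exact add_le_add (hM _) (hM _)

theorem Matrix.norm_le_l2_opNorm_of_mem_spectrum [DecidableEq n] {N : Matrix n n ℂ} {μ : ℂ}
    (hμ : μ ∈ spectrum ℂ N) : ‖μ‖ ≤ ‖N‖ := by
  cases subsingleton_or_nontrivial (Matrix n n ℂ)
  · simp [spectrum.of_subsingleton] at hμ
  · exact spectrum.norm_le_norm_of_mem hμ

theorem Matrix.abs_det_one_add_sub_one_le [DecidableEq n] (M : Matrix n n ℝ) :
    |(1 + M).det - 1| ≤ (‖M‖ + 1) ^ Fintype.card n - 1 := by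
  set B := (1 + M).map ((↑) : ℝ → ℂ)
  have hdet : (((1 + M).det - 1 : ℝ) : ℂ) = B.det - 1 := by
    rw [Complex.ofReal_sub, Complex.ofReal_one, ← Complex.ofRealHom_eq_coe, RingHom.map_det]
    rfl
  have hroots : ∀ μ ∈ B.charpoly.roots, ‖μ - 1‖ ≤ ‖M‖ := by
    intro μ hμ
    have hB : B = algebraMap ℂ _ 1 + M.map (↑) := by
      simp [B, Matrix.map_add]
    have hμB : (μ - 1) + 1 ∈ spectrum ℂ B := by
      rw [sub_add_cancel, mem_spectrum_iff_isRoot_charpoly]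
      exact Polynomial.isRoot_of_mem_roots hμ
    rw [hB, spectrum.add_mem_add_iff] at hμB
    exact (norm_le_l2_opNorm_of_mem_spectrum hμB).trans (l2_opNorm_map_ofReal_le M)
  rw [← Real.norm_eq_abs, ← Complex.norm_real, hdet, det_eq_prod_roots_charpoly,
    ← charpoly_natDegree_eq_dim B, ← IsAlgClosed.card_roots_eq_natDegree]
  exact B.charpoly.roots.norm_prod_sub_one_le hroots

theorem Matrix.abs_det_add_sub_det_le [DecidableEq n] (A E : Matrix n n ℝ) (hA : IsUnit A.det) :
    |(A + E).det - A.det| ≤ ((‖A⁻¹‖ * ‖E‖ + 1) ^ Fintype.card n - 1) * |A.det| := by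
  have hfactor : A + E = A * (1 + A⁻¹ * E) := by
    rw [Matrix.mul_add, mul_one, ← Matrix.mul_assoc, mul_nonsing_inv A hA, Matrix.one_mul]
  have hdet : (A + E).det - A.det = ((1 + A⁻¹ * E).det - 1) * A.det := by
    rw [hfactor, det_mul]
    ring
  rw [hdet, abs_mul]
  gcongr
  calc |(1 + A⁻¹ * E).det - 1| ≤ (‖A⁻¹ * E‖ + 1) ^ Fintype.card n - 1 :=
        abs_det_one_add_sub_one_le _
    _ ≤ (‖A⁻¹‖ * ‖E‖ + 1) ^ Fintype.card n - 1 := by grw [l2_opNorm_mul]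

theorem specNorm_eq_l2_opNorm {n : ℕ} (A : Matrix (Fin n) (Fin n) ℝ) : specNorm A = ‖A‖ := rfl

theorem stmt5 (n : ℕ) (A E : Matrix (Fin n) (Fin n) ℝ) (hA : IsUnit A.det) :
    |(A + E).det - A.det| ≤ ((specNorm A⁻¹ * specNorm E + 1) ^ n - 1) * |A.det| := by
  simpa only [specNorm_eq_l2_opNorm, Fintype.card_fin] using abs_det_add_sub_det_le A E hA
end

section
/- For a nonsingular n×n real matrix A and any ε with 0 ≤ n‖A^{-1}‖₂‖E‖₂ small enough (e.g. ‖A^{-1}‖₂‖E‖₂ ≤ 1/n), there exists a constant c (depending only on n, e.g. c = e) such that |det(A+E) - det(A)| ≤ c·n·‖A^{-1}‖₂·‖E‖₂·|det(A)|. -/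
/-!
Write `A + E = A * (1 + B)` with `B = A⁻¹ * E`, so that
`det (A + E) - det A = det A * (det (1 + B) - 1)`. The determinant is a continuous multilinear
function of the rows, hence `|det M| ≤ C * ∏ i, ‖M i‖` for some `C` (sup norms), and replacing
the rows of `1` by those of `1 + B` one at a time gives
`|det (1 + B) - 1| ≤ C * n * 2 ^ (n - 1) * max |B i j|` as long as the entries of `B` are at
most `1`. The entries of `B` are bounded by its spectral norm, which is submultiplicative.
-/

open Matrix
open scoped Matrix.Norms.Elementwise

section Perturbation

variable {ι : Type*} [Fintype ι] [DecidableEq ι]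

theorem exists_abs_det_le_mul_prod_norm_row :
    ∃ C : ℝ, 0 < C ∧ ∀ M : Matrix ι ι ℝ, |M.det| ≤ C * ∏ i, ‖M i‖ :=
  (detRowAlternating : (ι → ℝ) [⋀^ι]→ₗ[ℝ] ℝ).toMultilinearMap.exists_bound_of_continuous
    continuous_id.matrix_det

theorem abs_det_add_sub_det_le {C : ℝ} (hC : 0 ≤ C)
    (hdet : ∀ M : Matrix ι ι ℝ, |M.det| ≤ C * ∏ i, ‖M i‖) (M N : Matrix ι ι ℝ) :
    |(M + N).det - M.det| ≤
      C * Fintype.card ι * max ‖M + N‖ ‖M‖ ^ (Fintype.card ι - 1) * ‖N‖ := by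
  -- `of.symm` makes `+` and `-` those of `ι → ι → ℝ`, the domain of `detRowAlternating`.
  have := (detRowAlternating : (ι → ℝ) [⋀^ι]→ₗ[ℝ] ℝ).toMultilinearMap.norm_image_sub_le_of_bound
    hC hdet (of.symm M + of.symm N) (of.symm M)
  rw [add_sub_cancel_left] at this
  exact this

theorem exists_abs_det_one_add_sub_one_le :
    ∃ c : ℝ, 0 < c ∧ ∀ B : Matrix ι ι ℝ, ‖B‖ ≤ 1 →
      |(1 + B).det - 1| ≤ c * Fintype.card ι * ‖B‖ := by
  obtain ⟨C, hC, hdet⟩ := exists_abs_det_le_mul_prod_norm_row (ι := ι)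
  refine ⟨C * 2 ^ (Fintype.card ι - 1), by positivity, fun B hB => ?_⟩
  have h_one : ‖(1 : Matrix ι ι ℝ)‖ ≤ 1 :=
    (norm_le_iff zero_le_one).2 fun i j => by
      rcases eq_or_ne i j with rfl | h <;> simp [one_apply, *]
  have h_max : max ‖1 + B‖ ‖(1 : Matrix ι ι ℝ)‖ ≤ 2 :=
    max_le ((norm_add_le _ _).trans (by linarith)) (by linarith)
  calc |(1 + B).det - 1| = |(1 + B).det - (1 : Matrix ι ι ℝ).det| := by rw [det_one]
    _ ≤ C * Fintype.card ι * max ‖1 + B‖ ‖(1 : Matrix ι ι ℝ)‖ ^ (Fintype.card ι - 1) * ‖B‖ :=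
      abs_det_add_sub_det_le hC.le hdet 1 B
    _ ≤ C * Fintype.card ι * 2 ^ (Fintype.card ι - 1) * ‖B‖ := by gcongr
    _ = C * 2 ^ (Fintype.card ι - 1) * Fintype.card ι * ‖B‖ := by ring

end Perturbation

section SpecNorm

variable {n : ℕ}

theorem specNorm_mul_le (A B : Matrix (Fin n) (Fin n) ℝ) :
    specNorm (A * B) ≤ specNorm A * specNorm B := by
  unfold specNorm
  rw [map_mul]
  exact norm_mul_le _ _

theorem abs_apply_le_specNorm (M : Matrix (Fin n) (Fin n) ℝ) (i j : Fin n) :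
    |M i j| ≤ specNorm M := by
  set T := toEuclideanCLM (𝕜 := ℝ) M
  have hT : T (EuclideanSpace.single j 1) i = M i j := by
    simp [T, mulVec_single]
  calc |M i j| = ‖T (EuclideanSpace.single j 1) i‖ := by rw [hT, Real.norm_eq_abs]
    _ ≤ ‖T (EuclideanSpace.single j 1)‖ := PiLp.norm_apply_le _ i
    _ ≤ ‖T‖ * ‖EuclideanSpace.single j (1 : ℝ)‖ := T.le_opNorm _
    _ = specNorm M := by simp [specNorm, T]

theorem norm_le_specNorm (M : Matrix (Fin n) (Fin n) ℝ) : ‖M‖ ≤ specNorm M :=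
  (norm_le_iff (norm_nonneg _)).2 fun i j => abs_apply_le_specNorm M i j

end SpecNorm

theorem stmt6_general (n : ℕ) :
    ∃ c : ℝ, 0 < c ∧
      ∀ (A E : Matrix (Fin n) (Fin n) ℝ), IsUnit A.det →
        specNorm A⁻¹ * specNorm E ≤ 1 / (n : ℝ) →
        |(A + E).det - A.det| ≤ c * (n : ℝ) * specNorm A⁻¹ * specNorm E * |A.det| := by
  obtain ⟨c, hc, hpert⟩ := exists_abs_det_one_add_sub_one_le (ι := Fin n)
  refine ⟨c, hc, fun A E hA hx => ?_⟩
  have hB : ‖A⁻¹ * E‖ ≤ specNorm A⁻¹ * specNorm E :=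
    (norm_le_specNorm _).trans (specNorm_mul_le _ _)
  have hB_le_one : ‖A⁻¹ * E‖ ≤ 1 :=
    hB.trans (hx.trans ((one_div _).trans_le (Nat.cast_inv_le_one n)))
  have h_factor : A + E = A * (1 + A⁻¹ * E) := by
    rw [mul_add, mul_one, ← Matrix.mul_assoc, mul_nonsing_inv A hA, Matrix.one_mul]
  calc |(A + E).det - A.det| = |A.det| * |(1 + A⁻¹ * E).det - 1| := by
        rw [h_factor, det_mul, ← abs_mul, mul_sub_one]
    _ ≤ |A.det| * (c * n * ‖A⁻¹ * E‖) := by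
        gcongr
        simpa only [Fintype.card_fin] using hpert _ hB_le_one
    _ ≤ |A.det| * (c * n * (specNorm A⁻¹ * specNorm E)) := by gcongr
    _ = c * n * specNorm A⁻¹ * specNorm E * |A.det| := by ring

theorem stmt6 (n : ℕ) (hn : 0 < n) :
    ∃ c : ℝ, 0 < c ∧
      ∀ (A E : Matrix (Fin n) (Fin n) ℝ), IsUnit A.det →
        specNorm A⁻¹ * specNorm E ≤ 1 / (n : ℝ) →
        |(A + E).det - A.det| ≤ c * (n : ℝ) * specNorm A⁻¹ * specNorm E * |A.det| :=
  stmt6_general n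
end

section
/- Let φ(x) = w·∏_{i=1}^m ℓ_i(x) with each ℓ_i affine and ∂_s ℓ_j ∈ {+1, −1} for all j. Then for the partial derivative ∂_s φ(x) = w·∑_{j=1}^m (∂_s ℓ_j)·∏_{i≠j} ℓ_i(x), the finite-precision evaluation (with each ℓ_i evaluated with relative error θ_r, each product and sum operation carrying a (1+δ) factor with |δ| ≤ u) satisfies |∂_s φ(x) − computed value| ≤ γ_{(m−1)(r+1)} · ∑_{j=1}^m |φ(x)/ℓ_j(x)|, for all x with ℓ_j(x) ≠ 0 for all j. -/
/-!
Write `γ_k = k u / (1 - k u)`, so that `1 + γ_k = 1 / (1 - k u)`. Since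
`(1 - a u)(1 - b u) ≥ 1 - (a + b) u`, relative errors bounded by `γ_a` and `γ_b` compose to one
bounded by `γ_(a+b)`. Hence the `j`-th computed term of the derivative is the exact term
`w (∂_s ℓ_j) ∏_{i ≠ j} ℓ_i` times a factor within `γ_((m-1) r + (m-1))` of `1`, and
`|w (∂_s ℓ_j) ∏_{i ≠ j} ℓ_i| = |φ / ℓ_j|` because `∂_s ℓ_j = ±1`.
-/

open Finset

noncomputable def roundoffGamma (u k : ℝ) : ℝ := k * u / (1 - k * u)

namespace roundoffGamma

variable {u a b : ℝ}

lemma one_add (h : a * u < 1) : 1 + roundoffGamma u a = (1 - a * u)⁻¹ := by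
  have : 1 - a * u ≠ 0 := by linarith
  unfold roundoffGamma
  field_simp
  ring

lemma add_add_mul_le (hu : 0 ≤ u) (ha : 0 ≤ a) (hb : 0 ≤ b) (hab : (a + b) * u < 1) :
    roundoffGamma u a + roundoffGamma u b + roundoffGamma u a * roundoffGamma u b ≤
      roundoffGamma u (a + b) := by
  have hau : a * u < 1 := by nlinarith
  have hbu : b * u < 1 := by nlinarith
  suffices (1 + roundoffGamma u a) * (1 + roundoffGamma u b) ≤ 1 + roundoffGamma u (a + b) by
    linarith
  rw [one_add hau, one_add hbu, one_add hab, ← mul_inv]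
  apply inv_anti₀ (by linarith)
  nlinarith [mul_nonneg (mul_nonneg ha hb) (mul_nonneg hu hu)]

lemma abs_mul_sub_one_le {x y : ℝ} (hu : 0 ≤ u) (ha : 0 ≤ a) (hb : 0 ≤ b)
    (hab : (a + b) * u < 1) (hx : |x - 1| ≤ roundoffGamma u a) (hy : |y - 1| ≤ roundoffGamma u b) :
    |x * y - 1| ≤ roundoffGamma u (a + b) :=
  calc |x * y - 1| = |(x - 1) + (y - 1) + (x - 1) * (y - 1)| := by ring_nf
    _ ≤ |x - 1| + |y - 1| + |x - 1| * |y - 1| := by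
      rw [← abs_mul]; exact (abs_add_le _ _).trans (by gcongr; exact abs_add_le _ _)
    _ ≤ roundoffGamma u a + roundoffGamma u b + roundoffGamma u a * roundoffGamma u b := by
      gcongr; exact (abs_nonneg _).trans hx
    _ ≤ roundoffGamma u (a + b) := add_add_mul_le hu ha hb hab

lemma abs_prod_sub_one_le {ι : Type*} (s : Finset ι) {x : ι → ℝ} (hu : 0 ≤ u) (ha : 0 ≤ a)
    (hsa : #s * a * u < 1) (hx : ∀ i ∈ s, |x i - 1| ≤ roundoffGamma u a) :
    |∏ i ∈ s, x i - 1| ≤ roundoffGamma u (#s * a) := by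
  induction s using Finset.cons_induction with
  | empty => simp [roundoffGamma]
  | cons i s hi ih =>
    rw [prod_cons, card_cons, Nat.cast_succ, add_mul, one_mul, add_comm] at *
    have hsa' : #s * a * u < 1 := by nlinarith
    exact abs_mul_sub_one_le hu ha (by positivity) hsa (hx i (mem_cons_self i s))
      (ih hsa' fun j hj => hx j (mem_cons_of_mem hj))

end roundoffGamma

lemma abs_sum_sub_sum_mul_le {ι : Type*} (s : Finset ι) (c e : ι → ℝ) {g : ℝ}
    (he : ∀ j ∈ s, |e j - 1| ≤ g) :
    |∑ j ∈ s, c j - ∑ j ∈ s, c j * e j| ≤ g * ∑ j ∈ s, |c j| := by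
  rw [← sum_sub_distrib, mul_sum]
  refine (abs_sum_le_sum_abs _ _).trans (sum_le_sum fun j hj => ?_)
  calc |c j - c j * e j| = |c j| * |e j - 1| := by rw [← abs_mul, ← abs_neg]; ring_nf
    _ ≤ |c j| * g := by gcongr; exact he j hj
    _ = g * |c j| := mul_comm _ _

theorem stmt8_general (u : ℝ) (hu : u ∈ Set.Ioo (0 : ℝ) 1) (m r : ℕ)
    (hmr : (((m - 1) * (r + 1) : ℕ) : ℝ) * u < 1)
    (w : ℝ) (ℓ : Fin m → ℝ) (hℓ : ∀ j, ℓ j ≠ 0)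
    (dℓ : Fin m → ℝ) (hd : ∀ j, dℓ j = 1 ∨ dℓ j = -1)
    (τ : Fin m → ℝ) (hτ : ∀ i, |τ i| ≤ (r : ℝ) * u / (1 - (r : ℝ) * u))
    (σ : Fin m → ℝ)
    (hσ : ∀ j, |σ j| ≤ ((m - 1 : ℕ) : ℝ) * u / (1 - ((m - 1 : ℕ) : ℝ) * u))
    (φ dφ dφhat : ℝ)
    (hφ : φ = w * ∏ i, ℓ i)
    (hdφ : dφ = w * ∑ j, dℓ j * ∏ i ∈ Finset.univ.erase j, ℓ i)
    (hdφhat : dφhat =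
      w * ∑ j, dℓ j * (∏ i ∈ Finset.univ.erase j, (ℓ i * (1 + τ i))) * (1 + σ j)) :
    |dφ - dφhat| ≤
      (((m - 1) * (r + 1) : ℕ) : ℝ) * u / (1 - (((m - 1) * (r + 1) : ℕ) : ℝ) * u) *
        ∑ j, |φ / ℓ j| := by
  have hu0 : 0 ≤ u := hu.1.le
  have hN : (((m - 1) * (r + 1) : ℕ) : ℝ) = ((m - 1 : ℕ) : ℝ) * r + ((m - 1 : ℕ) : ℝ) := by
    push_cast; ring
  have hcard (j : Fin m) : (#(univ.erase j) : ℝ) = ((m - 1 : ℕ) : ℝ) := by simp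
  have hfactor (j : Fin m) : |(∏ i ∈ univ.erase j, (1 + τ i)) * (1 + σ j) - 1| ≤
      roundoffGamma u (((m - 1) * (r + 1) : ℕ) : ℝ) := by
    rw [hN] at hmr ⊢
    have hprod := roundoffGamma.abs_prod_sub_one_le (univ.erase j) (x := fun i => 1 + τ i) hu0 r.cast_nonneg
      (by rw [hcard]; nlinarith) fun i _ => by simpa [roundoffGamma] using hτ i
    rw [hcard] at hprod
    exact roundoffGamma.abs_mul_sub_one_le hu0 (by positivity) (by positivity) hmr hprod
      (by simpa [roundoffGamma] using hσ j)
  have hterm (j : Fin m) : |w * dℓ j * ∏ i ∈ univ.erase j, ℓ i| = |φ / ℓ j| := by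
    have hdj : |dℓ j| = 1 := by rcases hd j with h | h <;> simp [h]
    rw [hφ, ← mul_prod_erase univ ℓ (mem_univ j), mul_left_comm,
      mul_div_cancel_left₀ _ (hℓ j), abs_mul, abs_mul, abs_mul, hdj, mul_one]
  have hsplit : dφhat = ∑ j, w * dℓ j * (∏ i ∈ univ.erase j, ℓ i) *
      ((∏ i ∈ univ.erase j, (1 + τ i)) * (1 + σ j)) := by
    simp only [hdφhat, mul_sum, prod_mul_distrib]
    exact sum_congr rfl fun j _ => by ring
  have hexact : dφ = ∑ j, w * dℓ j * ∏ i ∈ univ.erase j, ℓ i := by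
    simp only [hdφ, mul_sum, mul_assoc]
  rw [hexact, hsplit]
  refine (abs_sum_sub_sum_mul_le univ _ _ fun j _ => hfactor j).trans_eq ?_
  simp only [hterm]
  rfl

theorem stmt8 (u : ℝ) (hu : u ∈ Set.Ioo (0 : ℝ) 1) (m r : ℕ) (hm : 1 ≤ m)
    (hr : (r : ℝ) * u < 1)
    (hmr : (((m - 1) * (r + 1) : ℕ) : ℝ) * u < 1)
    (w : ℝ) (ℓ : Fin m → ℝ) (hℓ : ∀ j, ℓ j ≠ 0)
    (dℓ : Fin m → ℝ) (hd : ∀ j, dℓ j = 1 ∨ dℓ j = -1)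
    (τ : Fin m → ℝ) (hτ : ∀ i, |τ i| ≤ (r : ℝ) * u / (1 - (r : ℝ) * u))
    (σ : Fin m → ℝ)
    (hσ : ∀ j, |σ j| ≤ ((m - 1 : ℕ) : ℝ) * u / (1 - ((m - 1 : ℕ) : ℝ) * u))
    (φ dφ dφhat : ℝ)
    (hφ : φ = w * ∏ i, ℓ i)
    (hdφ : dφ = w * ∑ j, dℓ j * ∏ i ∈ Finset.univ.erase j, ℓ i)
    (hdφhat : dφhat =
      w * ∑ j, dℓ j * (∏ i ∈ Finset.univ.erase j, (ℓ i * (1 + τ i))) * (1 + σ j)) :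
    |dφ - dφhat| ≤
      (((m - 1) * (r + 1) : ℕ) : ℝ) * u / (1 - (((m - 1) * (r + 1) : ℕ) : ℝ) * u) *
        ∑ j, |φ / ℓ j| :=
  stmt8_general u hu m r hmr w ℓ hℓ dℓ hd τ hτ σ hσ φ dφ dφhat hφ hdφ hdφhat
end

section
/- Let z_h(x) = ∑_{i=1}^{n} z_i φ_i(x) where each φ̂_i(x) = φ_i(x)(1+θ_{m(r+1)+1}) with |θ_{m(r+1)+1}| ≤ γ_{m(r+1)+1}, and the inner product ∑ z_i φ̂_i(x) is computed in precision u. Then the computed value ẑ_h satisfies, for all x in a compact set K, |z_h(x) − ẑ_h(x)| ≤ γ_{n + m(r+1)+1} · κ(V_K) · ‖z‖_∞, where κ(V_K) := max_{x∈K} ∑_{i=1}^n |φ_i(x)|. -/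
/-!
Each summand is perturbed as `z φ ↦ (z + Δz) φ (1 + θ)`, whose error is
`φ (z θ + Δz + Δz θ)`, hence at most `(γ_{m(r+1)+1} + γ_n + γ_{m(r+1)+1} γ_n) |z_i| |φ_i(x)|`.
The rule `γ_a + γ_b + γ_a γ_b ≤ γ_{a+b}` collapses the constant, and summing over `i` leaves
`‖z‖_∞ ∑ |φ_i(x)|`, which is bounded on the compact set `K` by the supremum of the
continuous function `∑ |φ_i|`.
-/

open Finset

/-- The rule `γ_a + γ_b + γ_a γ_b ≤ γ_{a+b}` for `γ_k = k u / (1 - k u)`, written with `a = k u`. -/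
lemma gamma_add_le {a b : ℝ} (ha : 0 ≤ a) (hb : 0 ≤ b) (hab : a + b < 1) :
    a / (1 - a) + b / (1 - b) + a / (1 - a) * (b / (1 - b)) ≤ (a + b) / (1 - (a + b)) := by
  have ha' : 0 < 1 - a := by linarith
  have hb' : 0 < 1 - b := by linarith
  have hab' : 0 < 1 - (a + b) := by linarith
  have hlhs : a / (1 - a) + b / (1 - b) + a / (1 - a) * (b / (1 - b))
      = (a + b - a * b) / ((1 - a) * (1 - b)) := by
    field_simp
    ring
  rw [hlhs, div_le_div_iff₀ (by positivity) hab']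
  nlinarith [mul_nonneg ha hb]

lemma abs_mul_sub_perturbed_le {z φ Δ θ a b : ℝ} (hθ : |θ| ≤ a) (hΔ : |Δ| ≤ b * |z|) :
    |z * φ - (z + Δ) * (φ * (1 + θ))| ≤ (a + b + a * b) * |z| * |φ| := by
  have herr : z * φ - (z + Δ) * (φ * (1 + θ)) = -(φ * (z * θ + Δ + Δ * θ)) := by ring
  have hzθ : |z * θ| ≤ |z| * a := by
    rw [abs_mul]
    exact mul_le_mul_of_nonneg_left hθ (abs_nonneg z)
  have hΔθ : |Δ * θ| ≤ b * |z| * a := by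
    rw [abs_mul]
    exact mul_le_mul hΔ hθ (abs_nonneg θ) ((abs_nonneg Δ).trans hΔ)
  have hinner : |z * θ + Δ + Δ * θ| ≤ (a + b + a * b) * |z| :=
    calc |z * θ + Δ + Δ * θ| ≤ |z * θ| + |Δ| + |Δ * θ| := abs_add_three _ _ _
      _ ≤ |z| * a + b * |z| + b * |z| * a := by gcongr
      _ = (a + b + a * b) * |z| := by ring
  rw [herr, abs_neg, abs_mul, mul_comm]
  exact mul_le_mul_of_nonneg_right hinner (abs_nonneg φ)

lemma abs_sum_mul_sub_perturbed_le {ι : Type*} [Fintype ι] (z φ Δ θ : ι → ℝ) {a b : ℝ}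
    (ha : 0 ≤ a) (hb : 0 ≤ b) (hθ : ∀ i, |θ i| ≤ a) (hΔ : ∀ i, |Δ i| ≤ b * |z i|) :
    |∑ i, z i * φ i - ∑ i, (z i + Δ i) * (φ i * (1 + θ i))|
      ≤ (a + b + a * b) * ‖z‖ * ∑ i, |φ i| := by
  have hc : 0 ≤ a + b + a * b := by positivity
  calc |∑ i, z i * φ i - ∑ i, (z i + Δ i) * (φ i * (1 + θ i))|
      = |∑ i, (z i * φ i - (z i + Δ i) * (φ i * (1 + θ i)))| := by rw [sum_sub_distrib]
    _ ≤ ∑ i, |z i * φ i - (z i + Δ i) * (φ i * (1 + θ i))| := abs_sum_le_sum_abs _ _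
    _ ≤ ∑ i, (a + b + a * b) * ‖z‖ * |φ i| := by
        gcongr with i
        refine (abs_mul_sub_perturbed_le (hθ i) (hΔ i)).trans ?_
        gcongr
        exact norm_le_pi_norm z i
    _ = (a + b + a * b) * ‖z‖ * ∑ i, |φ i| := by rw [mul_sum]

theorem stmt10 (d n m r : ℕ) (u : ℝ) (hu : u ∈ Set.Ioo (0 : ℝ) 1)
    (hsmall : u * ((n + m * (r + 1) + 1 : ℕ) : ℝ) < 1)
    (K : Set (Fin d → ℝ)) (hK : IsCompact K)
    (z : Fin n → ℝ) (φ : Fin n → (Fin d → ℝ) → ℝ) (hφc : ∀ i, Continuous (φ i))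
    (θ : Fin n → (Fin d → ℝ) → ℝ) (Δz : Fin n → (Fin d → ℝ) → ℝ)
    (hθ : ∀ i, ∀ x ∈ K, |θ i x| ≤
      ((m * (r + 1) + 1 : ℕ) : ℝ) * u / (1 - ((m * (r + 1) + 1 : ℕ) : ℝ) * u))
    (hΔ : ∀ i, ∀ x ∈ K, |Δz i x| ≤ (n : ℝ) * u / (1 - (n : ℝ) * u) * |z i|)
    (zh zhat : (Fin d → ℝ) → ℝ)
    (hzh : ∀ x, zh x = ∑ i, z i * φ i x)
    (hzhat : ∀ x ∈ K, zhat x = ∑ i, (z i + Δz i x) * (φ i x * (1 + θ i x))) :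
    ∀ x ∈ K, |zh x - zhat x| ≤
      ((n + m * (r + 1) + 1 : ℕ) : ℝ) * u / (1 - ((n + m * (r + 1) + 1 : ℕ) : ℝ) * u) *
        sSup ((fun y => ∑ i, |φ i y|) '' K) * ‖z‖ := by
  intro x hx
  set M : ℕ := m * (r + 1) + 1
  have hNu : ((n + m * (r + 1) + 1 : ℕ) : ℝ) * u = M * u + n * u := by
    simp only [M]; push_cast; ring
  have hMu : 0 ≤ (M : ℝ) * u := mul_nonneg (Nat.cast_nonneg _) hu.1.le
  have hnu : 0 ≤ (n : ℝ) * u := mul_nonneg (Nat.cast_nonneg _) hu.1.le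
  have hsum : (M : ℝ) * u + n * u < 1 := by linarith
  have hsup : ∑ i, |φ i x| ≤ sSup ((fun y => ∑ i, |φ i y|) '' K) :=
    le_csSup (hK.bddAbove_image (continuous_finsetSum _ fun i _ => (hφc i).abs).continuousOn)
      ⟨x, hx, rfl⟩
  calc |zh x - zhat x|
      ≤ (M * u / (1 - M * u) + n * u / (1 - n * u) + M * u / (1 - M * u) * (n * u / (1 - n * u)))
          * ‖z‖ * ∑ i, |φ i x| := by
        rw [hzh, hzhat x hx]
        exact abs_sum_mul_sub_perturbed_le _ _ _ _ (div_nonneg hMu (by linarith))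
          (div_nonneg hnu (by linarith)) (hθ · x hx) (hΔ · x hx)
    _ ≤ ((n + m * (r + 1) + 1 : ℕ) : ℝ) * u / (1 - ((n + m * (r + 1) + 1 : ℕ) : ℝ) * u) *
          ‖z‖ * sSup ((fun y => ∑ i, |φ i y|) '' K) := by
        rw [hNu]
        gcongr
        exact gamma_add_le hMu hnu hsum
    _ = _ := by ring
end
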